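/- arXiv:2206.14046 — 2 statements merged into one kernel-verified Lean document; each statement's English description precedes it below -/
import Mathlib

section
/- Suppose φ is a Radon measure over a locally compact Hausdorff space X, Y is a separable metric space, f is a φ-measurable Y-valued function, and X is φ-almost equal to the union of a countable family of compact subsets of X. Then the push-forward f#φ, defined by (f#φ)(B) = φ(f⁻¹[B]) for B ⊂ Y, is a Borel regular outer measure over Y. -/
/-!
Replace `f` by a Borel map `g` that agrees with it `φ`-a.e.; Borel sets are then Carathéodory
measurable because their `g`-preimages are measurable. Given `A ⊆ Y`, let `t ⊇ g ⁻¹' A` be a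
measurable hull. By Lusin's theorem on each `K i`, almost all of `tᶜ` is covered by countably many
compact sets on which `g` is continuous. Their images form a σ-compact, hence Borel, set `D`
disjoint from `A` with `tᶜ ⊆ g ⁻¹' D` a.e., so `B = Dᶜ` has `φ (g ⁻¹' B) ≤ φ t = φ (g ⁻¹' A)`.
-/

open MeasureTheory Set ENNReal TopologicalSpace

section Lusin

variable {X Y : Type*} [TopologicalSpace X] [T2Space X] [MeasurableSpace X]
  [OpensMeasurableSpace X] {φ : Measure X} [φ.InnerRegularCompactLTTop] {E : Set X}

theorem MeasurableSet.exists_isCompact_separating_sdiff_lt (hE : MeasurableSet E) (hφE : φ E ≠ ∞)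
    {S : Set X} (hS : MeasurableSet S) {ε : ℝ≥0∞} (hε : ε ≠ 0) :
    ∃ C ⊆ E, IsCompact C ∧ IsClosed (C \ S) ∧ φ (E \ C) < ε := by
  have hε2 : ε / 2 ≠ 0 := (ENNReal.half_pos hε).ne'
  obtain ⟨K, hKES, hK, hφK⟩ := (hE.inter hS).exists_isCompact_sdiff_lt
    (measure_ne_top_of_subset inter_subset_left hφE) hε2
  obtain ⟨L, hLES, hL, hφL⟩ := (hE.diff hS).exists_isCompact_sdiff_lt
    (measure_ne_top_of_subset sdiff_subset hφE) hε2
  have hKL : (K ∪ L) \ S = L := by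
    rw [union_sdiff_distrib, sdiff_eq_empty.2 (hKES.trans inter_subset_right), empty_union,
      sdiff_eq_left.2 (disjoint_of_subset_left hLES disjoint_sdiff_left)]
  refine ⟨K ∪ L, union_subset (hKES.trans inter_subset_left) (hLES.trans sdiff_subset),
    hK.union hL, by rw [hKL]; exact hL.isClosed, ?_⟩
  calc φ (E \ (K ∪ L)) ≤ φ ((E ∩ S) \ K ∪ (E \ S) \ L) :=
        measure_mono fun x ⟨hxE, hxKL⟩ => (em (x ∈ S)).imp
          (fun hxS => ⟨⟨hxE, hxS⟩, fun hxK => hxKL (.inl hxK)⟩)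
          (fun hxS => ⟨⟨hxE, hxS⟩, fun hxL => hxKL (.inr hxL)⟩)
    _ ≤ φ ((E ∩ S) \ K) + φ ((E \ S) \ L) := measure_union_le _ _
    _ < ε / 2 + ε / 2 := ENNReal.add_lt_add hφK hφL
    _ = ε := ENNReal.add_halves ε

theorem MeasurableSet.exists_isCompact_separating_family_sdiff_lt {ι : Type*} [Countable ι]
    (hE : MeasurableSet E) (hφE : φ E ≠ ∞) {S : ι → Set X} (hS : ∀ i, MeasurableSet (S i))
    {ε : ℝ≥0∞} (hε : ε ≠ 0) :
    ∃ C ⊆ E, IsCompact C ∧ (∀ i, IsClosed (C \ S i)) ∧ φ (E \ C) < ε := by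
  have hε2 : ε / 2 ≠ 0 := (ENNReal.half_pos hε).ne'
  obtain ⟨δ, hδ, hδε⟩ := ENNReal.exists_pos_sum_of_countable' hε2 ι
  obtain ⟨C₀, hC₀E, hC₀, hφC₀⟩ := hE.exists_isCompact_sdiff_lt hφE hε2
  choose C hCE hC hCS hφC using
    fun i => hE.exists_isCompact_separating_sdiff_lt hφE (hS i) (hδ i).ne'
  have hcomp : IsCompact (C₀ ∩ ⋂ i, C i) :=
    hC₀.inter_right (isClosed_iInter fun i => (hC i).isClosed)
  have hsub (i : ι) : C₀ ∩ ⋂ j, C j ⊆ C i := inter_subset_right.trans (iInter_subset C i)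
  refine ⟨C₀ ∩ ⋂ i, C i, inter_subset_left.trans hC₀E, hcomp, fun i => ?_, ?_⟩
  · rw [← inter_eq_left.2 (hsub i), inter_sdiff_assoc]
    exact hcomp.isClosed.inter (hCS i)
  · calc φ (E \ (C₀ ∩ ⋂ i, C i)) = φ (E \ C₀ ∪ ⋃ i, E \ C i) := by
          rw [sdiff_inter, sdiff_iInter]
      _ ≤ φ (E \ C₀) + ∑' i, φ (E \ C i) :=
          (measure_union_le _ _).trans (add_le_add_right (measure_iUnion_le _) _)
      _ < ε / 2 + ε / 2 :=
          ENNReal.add_lt_add hφC₀ ((ENNReal.tsum_le_tsum fun i => (hφC i).le).trans_lt hδε)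
      _ = ε := ENNReal.add_halves ε

variable [TopologicalSpace Y] [SecondCountableTopology Y] [MeasurableSpace Y]
  [OpensMeasurableSpace Y] {g : X → Y}

/-- Lusin's theorem. For a basic open `U`, the set `g ⁻¹' U` is relatively open in `C` because its
relative complement `C \ g ⁻¹' U` is closed. -/
theorem Measurable.exists_isCompact_continuousOn_sdiff_lt (hg : Measurable g)
    (hE : MeasurableSet E) (hφE : φ E ≠ ∞) {ε : ℝ≥0∞} (hε : ε ≠ 0) :
    ∃ C ⊆ E, IsCompact C ∧ ContinuousOn g C ∧ φ (E \ C) < ε := by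
  have hB := isBasis_countableBasis Y
  obtain ⟨C, hCE, hC, hCU, hφC⟩ := hE.exists_isCompact_separating_family_sdiff_lt hφE
    (S := fun U : countableBasis Y => g ⁻¹' U) (fun U => hg (hB.isOpen U.2).measurableSet) hε
  refine ⟨C, hCE, hC, hB.continuousOn_iff.2 fun U hU => ⟨_, (hCU ⟨U, hU⟩).isOpen_compl, ?_⟩, hφC⟩
  ext x
  simp only [mem_inter_iff, mem_compl_iff, Set.mem_sdiff, mem_preimage]
  tauto

theorem Measurable.exists_seq_isCompact_continuousOn_measure_sdiff_iUnion_eq_zero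
    (hg : Measurable g) (hE : MeasurableSet E) (hφE : φ E ≠ ∞) :
    ∃ C : ℕ → Set X, (∀ n, C n ⊆ E ∧ IsCompact (C n) ∧ ContinuousOn g (C n)) ∧
      φ (E \ ⋃ n, C n) = 0 := by
  choose C hCE hC hgC hφC using fun n : ℕ =>
    hg.exists_isCompact_continuousOn_sdiff_lt hE hφE (ENNReal.inv_ne_zero.2 (natCast_ne_top n))
  refine ⟨C, fun n => ⟨hCE n, hC n, hgC n⟩, le_antisymm ?_ zero_le⟩
  exact ge_of_tendsto' ENNReal.tendsto_inv_nat_nhds_zero fun n =>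
    (measure_mono (sdiff_subset_sdiff_right (subset_iUnion C n))).trans (hφC n).le

variable [T2Space Y] [IsFiniteMeasureOnCompacts φ] {K : ℕ → Set X}

theorem Measurable.exists_measurableSet_subset_image_measure_sdiff_preimage_eq_zero
    (hg : Measurable g) (hK : ∀ i, IsCompact (K i)) (hKcov : φ (⋃ i, K i)ᶜ = 0)
    (hE : MeasurableSet E) :
    ∃ D ⊆ g '' E, MeasurableSet D ∧ φ (E \ g ⁻¹' D) = 0 := by
  choose C hC hφC using fun i =>
    hg.exists_seq_isCompact_continuousOn_measure_sdiff_iUnion_eq_zero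
      (hE.inter (hK i).measurableSet)
      (measure_ne_top_of_subset inter_subset_right ((hK i).measure_lt_top (μ := φ)).ne)
  refine ⟨⋃ i, ⋃ n, g '' C i n,
    iUnion₂_subset fun i n => image_mono ((hC i n).1.trans inter_subset_left),
    .iUnion fun i => .iUnion fun n =>
      ((hC i n).2.1.image_of_continuousOn (hC i n).2.2).isClosed.measurableSet, ?_⟩
  refine measure_mono_null ?_ (measure_union_null hKcov (measure_iUnion_null hφC))
  rintro x ⟨hxE, hxD⟩
  simp only [mem_preimage, mem_iUnion, not_exists] at hxD
  by_cases hxK : x ∈ ⋃ i, K i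
  · obtain ⟨i, hi⟩ := mem_iUnion.1 hxK
    refine .inr (mem_iUnion.2 ⟨i, ⟨hxE, hi⟩, fun hxC => ?_⟩)
    obtain ⟨n, hn⟩ := mem_iUnion.1 hxC
    exact hxD i n (mem_image_of_mem g hn)
  · exact .inl hxK

theorem Measurable.exists_measurableSet_superset_measure_preimage_eq (hg : Measurable g)
    (hK : ∀ i, IsCompact (K i)) (hKcov : φ (⋃ i, K i)ᶜ = 0) (A : Set Y) :
    ∃ B, MeasurableSet B ∧ A ⊆ B ∧ φ (g ⁻¹' B) = φ (g ⁻¹' A) := by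
  set t := toMeasurable φ (g ⁻¹' A)
  obtain ⟨D, hDt, hD, hφD⟩ :=
    hg.exists_measurableSet_subset_image_measure_sdiff_preimage_eq_zero hK hKcov
      (measurableSet_toMeasurable φ (g ⁻¹' A)).compl
  have hAD : A ⊆ Dᶜ := fun y hyA hyD => by
    obtain ⟨x, hxt, rfl⟩ := hDt hyD
    exact hxt (subset_toMeasurable φ _ hyA)
  refine ⟨Dᶜ, hD.compl, hAD, le_antisymm ?_ (measure_mono (preimage_mono hAD))⟩
  calc φ (g ⁻¹' Dᶜ) ≤ φ (t ∪ tᶜ \ g ⁻¹' D) :=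
        measure_mono fun x hx => (em (x ∈ t)).imp id fun hxt => ⟨hxt, hx⟩
    _ ≤ φ t + φ (tᶜ \ g ⁻¹' D) := measure_union_le _ _
    _ = φ (g ⁻¹' A) := by rw [hφD, add_zero, measure_toMeasurable]

end Lusin

theorem stmt7_general {X Y : Type*} [TopologicalSpace X]
    [T2Space X] [MeasurableSpace X] [BorelSpace X]
    [MetricSpace Y] [TopologicalSpace.SeparableSpace Y]
    [MeasurableSpace Y] [BorelSpace Y]
    (φ : Measure X) [φ.Regular]
    (f : X → Y) (hf : AEMeasurable f φ)
    (K : ℕ → Set X) (hK : ∀ i, IsCompact (K i)) (hKcov : φ ((⋃ i, K i)ᶜ) = 0) :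
    -- Borel sets are Carathéodory measurable for `B ↦ φ (f ⁻¹ B)`:
    (∀ B : Set Y, MeasurableSet B →
      ∀ A : Set Y, φ (f ⁻¹' A) = φ (f ⁻¹' (A ∩ B)) + φ (f ⁻¹' (A \ B))) ∧
    -- Borel regularity: every set is contained in a Borel set of equal measure:
    (∀ A : Set Y, ∃ B : Set Y, MeasurableSet B ∧ A ⊆ B ∧
      φ (f ⁻¹' B) = φ (f ⁻¹' A)) := by
  have : SecondCountableTopology Y := UniformSpace.secondCountable_of_separable Y
  have hfg (S : Set Y) : φ (f ⁻¹' S) = φ (hf.mk f ⁻¹' S) :=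
    measure_congr (hf.ae_eq_mk.preimage S)
  refine ⟨fun B hB A => ?_, fun A => ?_⟩
  · rw [hfg, hfg, hfg, preimage_inter, preimage_sdiff]
    exact (measure_inter_add_sdiff _ (hf.measurable_mk hB)).symm
  · simpa only [hfg] using
      hf.measurable_mk.exists_measurableSet_superset_measure_preimage_eq hK hKcov A

/-- if `φ` is a Radon measure over a locally compact Hausdorff
space `X`, `Y` is a separable metric space, `f` is a `φ`-measurable `Y`-valued
function, and `X` is `φ`-almost equal to a countable union of compact sets,
then the push-forward `f#φ`, `B ↦ φ (f ⁻¹ B)`, is a Borel regular outer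
measure over `Y`: every Borel subset of `Y` is Carathéodory measurable for it,
and every subset of `Y` is contained in a Borel set of the same `f#φ`-measure. -/
theorem stmt7 {X Y : Type*} [TopologicalSpace X] [LocallyCompactSpace X]
    [T2Space X] [MeasurableSpace X] [BorelSpace X]
    [MetricSpace Y] [TopologicalSpace.SeparableSpace Y]
    [MeasurableSpace Y] [BorelSpace Y]
    (φ : Measure X) [φ.Regular]
    (f : X → Y) (hf : AEMeasurable f φ)
    (K : ℕ → Set X) (hK : ∀ i, IsCompact (K i)) (hKcov : φ ((⋃ i, K i)ᶜ) = 0) :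
    -- Borel sets are Carathéodory measurable for `B ↦ φ (f ⁻¹ B)`:
    (∀ B : Set Y, MeasurableSet B →
      ∀ A : Set Y, φ (f ⁻¹' A) = φ (f ⁻¹' (A ∩ B)) + φ (f ⁻¹' (A \ B))) ∧
    -- Borel regularity: every set is contained in a Borel set of equal measure:
    (∀ A : Set Y, ∃ B : Set Y, MeasurableSet B ∧ A ⊆ B ∧
      φ (f ⁻¹' B) = φ (f ⁻¹' A)) :=
  stmt7_general φ f hf K hK hKcov
end

section
/- Let m ≤ n be nonnegative integers, identify the oriented Grassmannian G_o(n,m) with the set of unit simple m-vectors in Λ_m ℝⁿ and the Grassmannian G(n,m) with a subset of the symmetric square via α(ζ) = ζ ⊙ ζ / 2. Then for all ζ, ζ' ∈ G_o(n,m) one has |α(ζ) − α(ζ')|² = |ζ − ζ'|² (1 + ζ • ζ')/2; consequently α is 1-Lipschitz, and on any subset U of G_o(n,m) with diameter < 2, α|U is injective with Lipschitz inverse. -/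
open scoped RealInnerProductSpace

/-- let `E` play the role of `Λ_m ℝⁿ` (with its inner product),
`Go ⊆ E` the set of unit simple `m`-vectors (the oriented Grassmannian, a
subset of the unit sphere), and let `sq : E → F` be the symmetric-square map
`ζ ↦ ζ ⊙ ζ` into the inner product space `F` playing the role of `⊙₂ Λ_m ℝⁿ`,
characterised by `⟪ζ ⊙ ζ, ζ' ⊙ ζ'⟫ = 2 ⟪ζ, ζ'⟫²`; set `α ζ = ζ ⊙ ζ / 2`.
Then for all `ζ, ζ' ∈ Go`,
`‖α ζ − α ζ'‖² = ‖ζ − ζ'‖² (1 + ⟪ζ, ζ'⟫)/2`; consequently `α` is 1-Lipschitz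
on `Go`, and on any `U ⊆ Go` of diameter `< 2`, `α` is injective with
Lipschitz inverse. -/
theorem stmt13 {E F : Type*}
    [NormedAddCommGroup E] [InnerProductSpace ℝ E]
    [NormedAddCommGroup F] [InnerProductSpace ℝ F]
    (Go : Set E) (hGo : ∀ ζ ∈ Go, ‖ζ‖ = 1)
    (sq : E → F)
    (hsq : ∀ ζ ζ' : E, ⟪sq ζ, sq ζ'⟫ = 2 * ⟪ζ, ζ'⟫ ^ 2)
    (α : E → F) (hα : ∀ ζ, α ζ = (2 : ℝ)⁻¹ • sq ζ) :
    (∀ ζ ∈ Go, ∀ ζ' ∈ Go,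
      ‖α ζ - α ζ'‖ ^ 2 = ‖ζ - ζ'‖ ^ 2 * (1 + ⟪ζ, ζ'⟫) / 2) ∧
    LipschitzOnWith 1 α Go ∧
    (∀ U ⊆ Go, Metric.diam U < 2 →
      Set.InjOn α U ∧
      ∃ K : NNReal, ∀ ζ ∈ U, ∀ ζ' ∈ U, ‖ζ - ζ'‖ ≤ K * ‖α ζ - α ζ'‖) := by
  -- inner products of α values
  have hainner : ∀ a b : E, ⟪α a, α b⟫ = 2⁻¹ * ⟪a, b⟫ ^ 2 := by
    intro a b
    rw [hα, hα, real_inner_smul_left, real_inner_smul_right, hsq]; ring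
  have hself : ∀ ζ ∈ Go, ⟪ζ, ζ⟫ = 1 := by
    intro ζ hζ
    rw [real_inner_self_eq_norm_sq, hGo ζ hζ]; norm_num
  -- the two key square identities
  have hA : ∀ ζ ∈ Go, ∀ ζ' ∈ Go, ‖α ζ - α ζ'‖ ^ 2 = 1 - ⟪ζ, ζ'⟫ ^ 2 := by
    intro ζ hζ ζ' hζ'
    rw [← real_inner_self_eq_norm_sq, inner_sub_sub_self, hainner, hainner, hainner,
      hainner, real_inner_comm ζ' ζ, hself ζ hζ, hself ζ' hζ']
    ring
  have hB : ∀ ζ ∈ Go, ∀ ζ' ∈ Go, ‖ζ - ζ'‖ ^ 2 = 2 - 2 * ⟪ζ, ζ'⟫ := by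
    intro ζ hζ ζ' hζ'
    rw [← real_inner_self_eq_norm_sq, inner_sub_sub_self, real_inner_comm ζ' ζ,
      hself ζ hζ, hself ζ' hζ']
    ring
  have hCS : ∀ ζ ∈ Go, ∀ ζ' ∈ Go, |⟪ζ, ζ'⟫| ≤ 1 := by
    intro ζ hζ ζ' hζ'
    have := abs_real_inner_le_norm ζ ζ'
    rwa [hGo ζ hζ, hGo ζ' hζ', mul_one] at this
  refine ⟨?_, ?_, ?_⟩
  · intro ζ hζ ζ' hζ'
    rw [hA ζ hζ ζ' hζ', hB ζ hζ ζ' hζ']; ring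
  · apply LipschitzOnWith.of_dist_le_mul
    intro ζ hζ ζ' hζ'
    rw [dist_eq_norm, dist_eq_norm, NNReal.coe_one, one_mul]
    have h1 := hA ζ hζ ζ' hζ'
    have h2 := hB ζ hζ ζ' hζ'
    have ht := abs_le.mp (hCS ζ hζ ζ' hζ')
    have hn1 : (0:ℝ) ≤ ‖α ζ - α ζ'‖ := norm_nonneg _
    have hn2 : (0:ℝ) ≤ ‖ζ - ζ'‖ := norm_nonneg _
    nlinarith [sq_nonneg (‖α ζ - α ζ'‖ - ‖ζ - ζ'‖), sq_nonneg (‖α ζ - α ζ'‖ + ‖ζ - ζ'‖)]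
  · intro U hU hdiam
    set d := Metric.diam U with hd
    have hd0 : 0 ≤ d := Metric.diam_nonneg
    have hbdd : Bornology.IsBounded U := by
      apply (Metric.isBounded_closedBall (x := (0:E)) (r := 1)).subset
      intro x hx
      simp [Metric.mem_closedBall, dist_eq_norm, hGo x (hU hx)]
    have hd2 : d ^ 2 < 4 := by nlinarith
    set s := Real.sqrt (4 - d ^ 2) with hs
    have hs0 : 0 < s := Real.sqrt_pos.mpr (by linarith)
    have hs2 : s ^ 2 = 4 - d ^ 2 := Real.sq_sqrt (by linarith)
    set c := 2 / s with hc
    have hc0 : 0 < c := by positivity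
    have hc2 : c ^ 2 * (4 - d ^ 2) = 4 := by
      rw [hc, div_pow, hs2, div_mul_cancel₀]
      · norm_num
      · linarith
    have key : ∀ ζ ∈ U, ∀ ζ' ∈ U, ‖ζ - ζ'‖ ≤ c * ‖α ζ - α ζ'‖ := by
      intro ζ hζ ζ' hζ'
      have hζG := hU hζ
      have hζ'G := hU hζ'
      have h1 := hA ζ hζG ζ' hζ'G
      have h2 := hB ζ hζG ζ' hζ'G
      have ht := abs_le.mp (hCS ζ hζG ζ' hζ'G)
      have hdist : ‖ζ - ζ'‖ ≤ d := by
        rw [← dist_eq_norm]; exact Metric.dist_le_diam_of_mem hbdd hζ hζ'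
      have hdsq : ‖ζ - ζ'‖ ^ 2 ≤ d ^ 2 := by
        nlinarith [norm_nonneg (ζ - ζ')]
      have hsqle : ‖ζ - ζ'‖ ^ 2 ≤ c ^ 2 * ‖α ζ - α ζ'‖ ^ 2 := by
        nlinarith [mul_nonneg (sub_nonneg.mpr ht.2)
          (by linarith [hdsq, h2] : (0:ℝ) ≤ 2 * d ^ 2 - 4 + 4 * ⟪ζ, ζ'⟫), sq_nonneg c]
      have hn1 : (0:ℝ) ≤ ‖α ζ - α ζ'‖ := norm_nonneg _
      have hn2 : (0:ℝ) ≤ ‖ζ - ζ'‖ := norm_nonneg _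
      nlinarith [sq_nonneg (‖ζ - ζ'‖ - c * ‖α ζ - α ζ'‖),
        sq_nonneg (‖ζ - ζ'‖ + c * ‖α ζ - α ζ'‖), mul_nonneg hc0.le hn1]
    constructor
    · intro ζ hζ ζ' hζ' heq
      have := key ζ hζ ζ' hζ'
      rw [heq, sub_self, norm_zero, mul_zero] at this
      have : ζ - ζ' = 0 := by
        have := le_antisymm this (norm_nonneg _)
        exact norm_eq_zero.mp this
      exact sub_eq_zero.mp this
    · refine ⟨Real.toNNReal c, ?_⟩
      intro ζ hζ ζ' hζ'
      have := key ζ hζ ζ' hζ'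
      rwa [Real.coe_toNNReal c hc0.le]
end
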